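/- Null space characterization of the Abaffian: if in addition a₁, …, a_i are linearly independent, then for each 1 ≤ i ≤ m the null space of H_{i+1}, i.e. {x ∈ ℝⁿ : H_{i+1} x = 0}, equals the linear span of a₁, …, a_i (the range of A_iᵀ where A_i = (a₁, …, a_i)ᵀ). -/

import Mathlib

/-!
If `w ⬝ᵥ H *ᵥ a ≠ 0`, the update `H' = H - (H a)(wᵀ H) / (wᵀ H a)` satisfies
`H' x = H x - ((wᵀ H x) / (wᵀ H a)) H a`, so `H' x = 0` exactly when `H x` is a multiple `t • H a`,
i.e. when `x - t • a ∈ ker H`. Hence `ker H' = ker H ⊔ span {a}`, and starting from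
`ker H₁ = 0` induction gives `ker H_{i+1} = span {a₁, …, aᵢ}`.
-/

open Matrix

section AbaffianUpdate

variable {K ι : Type*} [Field K] [Fintype ι]

def abaffianUpdate (H : Matrix ι ι K) (a w : ι → K) : Matrix ι ι K :=
  H - (w ⬝ᵥ H *ᵥ a)⁻¹ • vecMulVec (H *ᵥ a) (w ᵥ* H)

theorem abaffianUpdate_mulVec (H : Matrix ι ι K) (a w x : ι → K) :
    abaffianUpdate H a w *ᵥ x = H *ᵥ x - ((w ⬝ᵥ H *ᵥ x) / (w ⬝ᵥ H *ᵥ a)) • H *ᵥ a := by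
  rw [abaffianUpdate, sub_mulVec, smul_mulVec, vecMulVec_mulVec, op_smul_eq_smul, smul_smul,
    ← dotProduct_mulVec, inv_mul_eq_div]

theorem ker_abaffianUpdate {H : Matrix ι ι K} {a w : ι → K} (h : w ⬝ᵥ H *ᵥ a ≠ 0) :
    LinearMap.ker (abaffianUpdate H a w).mulVecLin = LinearMap.ker H.mulVecLin ⊔ K ∙ a := by
  apply le_antisymm
  · intro x hx
    set t := (w ⬝ᵥ H *ᵥ x) / (w ⬝ᵥ H *ᵥ a)
    have hHx : H *ᵥ x = t • H *ᵥ a := by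
      simpa [abaffianUpdate_mulVec, sub_eq_zero] using hx
    refine Submodule.mem_sup.mpr
      ⟨x - t • a, ?_, t • a, Submodule.smul_mem _ t (Submodule.mem_span_singleton_self a),
        sub_add_cancel x _⟩
    simp [mulVec_sub, mulVec_smul, hHx]
  · refine sup_le (fun x hx => ?_) ((Submodule.span_singleton_le_iff_mem _ _).mpr ?_)
    · have hHx : H *ᵥ x = 0 := hx
      simp [abaffianUpdate_mulVec, hHx]
    · simp [abaffianUpdate_mulVec, div_self h]

end AbaffianUpdate

theorem span_range_fin_succ {K M : Type*} [Semiring K] [AddCommMonoid M] [Module K M]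
    (f : ℕ → M) (i : ℕ) :
    Submodule.span K (Set.range fun j : Fin (i + 1) => f (j + 1)) =
      Submodule.span K (Set.range fun j : Fin i => f (j + 1)) ⊔ K ∙ f (i + 1) := by
  have : (Set.range fun j : Fin (i + 1) => f (j + 1)) =
      insert (f (i + 1)) (Set.range fun j : Fin i => f (j + 1)) := by
    ext x
    simp only [Set.mem_range, Set.mem_insert_iff, Fin.exists_fin_succ', Fin.val_castSucc,
      Fin.val_last]
    tauto
  rw [this, Submodule.span_insert, sup_comm]

theorem ker_abaffian_eq_span {K ι : Type*} [Field K] [Fintype ι] [DecidableEq ι] {m : ℕ}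
    (a w : ℕ → ι → K) (H : ℕ → Matrix ι ι K) (hH1 : IsUnit (H 1))
    (hw : ∀ i, 1 ≤ i → i ≤ m → w i ⬝ᵥ H i *ᵥ a i ≠ 0)
    (hrec : ∀ i, 1 ≤ i → i ≤ m → H (i + 1) = abaffianUpdate (H i) (a i) (w i)) :
    ∀ i ≤ m, LinearMap.ker (H (i + 1)).mulVecLin =
      Submodule.span K (Set.range fun j : Fin i => a (j + 1)) := by
  intro i
  induction i with
  | zero =>
    intro _
    simpa [Set.range_eq_empty, ker_mulVecLin_eq_bot_iff] using
      fun v hv => mulVec_injective_iff_isUnit.mpr hH1 (hv.trans (mulVec_zero _).symm)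
  | succ i ih =>
    intro hi
    rw [hrec (i + 1) (by omega) hi, ker_abaffianUpdate (hw (i + 1) (by omega) hi),
      ih (by omega), span_range_fin_succ]

theorem abs_null_space_abaffian_general
    (m n : ℕ)
    (a w : ℕ → (Fin n → ℝ))
    (H : ℕ → Matrix (Fin n) (Fin n) ℝ)
    (hH1 : IsUnit (H 1))
    (hw : ∀ i, 1 ≤ i → i ≤ m → w i ⬝ᵥ (H i).mulVec (a i) ≠ 0)
    (hrec : ∀ i, 1 ≤ i → i ≤ m →
      H (i + 1) = H i - (w i ⬝ᵥ (H i).mulVec (a i))⁻¹ •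
        Matrix.vecMulVec ((H i).mulVec (a i)) (Matrix.vecMul (w i) (H i))) :
    ∀ i, 1 ≤ i → i ≤ m →
      LinearIndependent ℝ (fun j : Fin i => a (j.1 + 1)) →
      {x : Fin n → ℝ | (H (i + 1)).mulVec x = 0} =
        ↑(Submodule.span ℝ (Set.range fun j : Fin i => a (j.1 + 1))) := by
  intro i _ hi _
  rw [← ker_abaffian_eq_span a w H hH1 hw hrec i hi]
  rfl

theorem abs_null_space_abaffian
    (m n : ℕ) (hm : 0 < m) (hmn : m ≤ n)
    (a z w p : ℕ → (Fin n → ℝ))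
    (H : ℕ → Matrix (Fin n) (Fin n) ℝ)
    (hH1 : IsUnit (H 1))
    (hz : ∀ i, 1 ≤ i → i ≤ m → z i ⬝ᵥ (H i).mulVec (a i) ≠ 0)
    (hw : ∀ i, 1 ≤ i → i ≤ m → w i ⬝ᵥ (H i).mulVec (a i) ≠ 0)
    (hrec : ∀ i, 1 ≤ i → i ≤ m →
      H (i + 1) = H i - (w i ⬝ᵥ (H i).mulVec (a i))⁻¹ •
        Matrix.vecMulVec ((H i).mulVec (a i)) (Matrix.vecMul (w i) (H i)))
    (hp : ∀ i, 1 ≤ i → i ≤ m → p i = Matrix.mulVec (H i)ᵀ (z i)) :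
    ∀ i, 1 ≤ i → i ≤ m →
      LinearIndependent ℝ (fun j : Fin i => a (j.1 + 1)) →
      {x : Fin n → ℝ | (H (i + 1)).mulVec x = 0} =
        ↑(Submodule.span ℝ (Set.range fun j : Fin i => a (j.1 + 1))) :=
  abs_null_space_abaffian_general m n a w H hH1 hw hrec
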